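/- arXiv:2512.16535 — 3 statements merged into one kernel-verified Lean document; each statement's English description precedes it below -/
import Mathlib

section
/- Let H be a Hilbert space and let U, V be bounded operators on H. Define W = [[1,U],[0,1]]·[[1,0],[-V,1]]·[[1,U],[0,1]]·[[0,-1],[1,0]] as a 2×2 operator matrix on H ⊕ H, and e₁₁ = [[1,0],[0,0]]. Then W is invertible and W e₁₁ W⁻¹ = [[1-(1-UV)², (2-UV)U(1-VU)],[V(1-UV), (1-VU)²]]. -/
/-- For bounded operators `U V` on a complex Hilbert space `H`, the 2×2 operator
matrix `W = [[1,U],[0,1]]·[[1,0],[-V,1]]·[[1,U],[0,1]]·[[0,-1],[1,0]]` is invertible and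
`W e₁₁ W⁻¹` equals the explicit idempotent matrix. -/
theorem stmt0 {H : Type*} [NormedAddCommGroup H] [InnerProductSpace ℂ H] [CompleteSpace H]
    (U V : H →L[ℂ] H)
    (e11 W : Matrix (Fin 2) (Fin 2) (H →L[ℂ] H))
    (he11 : e11 = !![1, 0; 0, 0])
    (hW : W = !![1, U; 0, 1] * !![1, 0; -V, 1] * !![1, U; 0, 1] * !![0, -1; 1, 0]) :
    IsUnit W ∧
      W * e11 * Ring.inverse W =
        !![1 - (1 - U * V) ^ 2, (2 - U * V) * U * (1 - V * U);
           V * (1 - U * V), (1 - V * U) ^ 2] := by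
  have hW' : W = !![(2 - U * V) * U, -(1 - U * V); 1 - V * U, V] := by
    rw [hW, ← Matrix.ext_iff]
    intro i j
    fin_cases i <;> fin_cases j <;> simp [Matrix.mul_apply, Fin.sum_univ_two] <;> noncomm_ring
  set Winv : Matrix (Fin 2) (Fin 2) (H →L[ℂ] H) :=
    !![V, 1 - V * U; U * V - 1, (2 - U * V) * U] with hWinv
  have h1 : W * Winv = 1 := by
    rw [hW', hWinv, ← Matrix.ext_iff]
    intro i j
    fin_cases i <;> fin_cases j <;>
      simp [Matrix.mul_apply, Fin.sum_univ_two, Matrix.one_apply] <;> noncomm_ring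
  have h2 : Winv * W = 1 := by
    rw [hW', hWinv, ← Matrix.ext_iff]
    intro i j
    fin_cases i <;> fin_cases j <;>
      simp [Matrix.mul_apply, Fin.sum_univ_two, Matrix.one_apply] <;> noncomm_ring
  have hu : IsUnit W := ⟨⟨W, Winv, h1, h2⟩, rfl⟩
  refine ⟨hu, ?_⟩
  have hinv : Ring.inverse W = Winv := Ring.inverse_unit ⟨W, Winv, h1, h2⟩
  rw [hinv, hW', he11, hWinv, ← Matrix.ext_iff]
  intro i j
  fin_cases i <;> fin_cases j <;> simp [Matrix.mul_apply, Fin.sum_univ_two] <;> noncomm_ring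
end

section
/- If U and V are bounded operators on a Hilbert space with ‖1 - UV‖ ≤ ε and ‖1 - VU‖ ≤ ε for some ε ≥ 0, then the idempotent P = [[1-(1-UV)², (2-UV)U(1-VU)],[V(1-UV), (1-VU)²]] satisfies ‖P - e₁₁‖ ≤ ε·(ε + (2+ε)(1+ε)·‖U‖ + ‖V‖ + ε), where e₁₁ = [[1,0],[0,0]]. In particular each entry of P - e₁₁ has norm bounded by an explicit polynomial in ε, ‖U‖, ‖V‖ that tends to 0 as ε → 0 with ‖U‖, ‖V‖ bounded. -/
/-- if `‖1 - UV‖ ≤ ε` and `‖1 - VU‖ ≤ ε` then the idempotent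
`P = [[1-(1-UV)², (2-UV)U(1-VU)],[V(1-UV), (1-VU)²]]` is close to `e₁₁ = [[1,0],[0,0]]`:
each entry of `P - e₁₁` is bounded by `ε·(ε + (2+ε)(1+ε)‖U‖ + ‖V‖ + ε)`
(the norm on 2×2 operator matrices being taken entrywise, as allowed by the context). -/
theorem stmt2 {H : Type*} [NormedAddCommGroup H] [InnerProductSpace ℂ H] [CompleteSpace H]
    (U V : H →L[ℂ] H) (ε : ℝ) (hε : 0 ≤ ε)
    (hUV : ‖(1 : H →L[ℂ] H) - U * V‖ ≤ ε) (hVU : ‖(1 : H →L[ℂ] H) - V * U‖ ≤ ε)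
    (P e11 : Matrix (Fin 2) (Fin 2) (H →L[ℂ] H))
    (hP : P = !![1 - (1 - U * V) ^ 2, (2 - U * V) * U * (1 - V * U);
                 V * (1 - U * V), (1 - V * U) ^ 2])
    (he11 : e11 = !![1, 0; 0, 0]) :
    ∀ i j, ‖(P - e11) i j‖ ≤ ε * (ε + (2 + ε) * (1 + ε) * ‖U‖ + ‖V‖ + ε) := by
  subst hP he11
  have hU : (0:ℝ) ≤ ‖U‖ := norm_nonneg U
  have hV : (0:ℝ) ≤ ‖V‖ := norm_nonneg V
  have h2 : ‖(2 : H →L[ℂ] H) - U * V‖ ≤ 2 + ε := by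
    have : (2 : H →L[ℂ] H) - U * V = 1 + (1 - U * V) := by rw [← one_add_one_eq_two]; abel
    rw [this]
    calc ‖(1 : H →L[ℂ] H) + (1 - U * V)‖ ≤ ‖(1 : H →L[ℂ] H)‖ + ‖(1 : H →L[ℂ] H) - U * V‖ :=
          norm_add_le _ _
      _ ≤ 1 + ε := by
          have h1 : ‖(1 : H →L[ℂ] H)‖ ≤ 1 := ContinuousLinearMap.norm_id_le
          linarith
      _ ≤ 2 + ε := by linarith
  have hA : (0:ℝ) ≤ (2 + ε) * (1 + ε) * ‖U‖ := by positivity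
  have h2ε : (0:ℝ) ≤ 2 + ε := by linarith
  have key : ∀ t : ℝ, t ≤ ε + (2 + ε) * (1 + ε) * ‖U‖ + ‖V‖ + ε →
      ε * t ≤ ε * (ε + (2 + ε) * (1 + ε) * ‖U‖ + ‖V‖ + ε) := fun t ht =>
    mul_le_mul_of_nonneg_left ht hε
  intro i j
  fin_cases i <;> fin_cases j <;>
    simp only [Matrix.sub_apply] <;> norm_num
  · -- (0,0)
    rw [sq]
    calc ‖((1:H →L[ℂ] H) - U*V) * (1 - U*V)‖ ≤ ‖(1:H →L[ℂ] H) - U*V‖ * ‖(1:H →L[ℂ] H) - U*V‖ :=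
          norm_mul_le _ _
      _ ≤ ε * ε := mul_le_mul hUV hUV (norm_nonneg _) hε
      _ ≤ _ := key ε (by linarith)
  · -- (0,1)
    calc ‖((2:H →L[ℂ] H) - U*V) * U * (1 - V*U)‖
        ≤ ‖((2:H →L[ℂ] H) - U*V) * U‖ * ‖(1:H →L[ℂ] H) - V*U‖ := norm_mul_le _ _
      _ ≤ ((2 + ε) * ‖U‖) * ε := by
          refine mul_le_mul ?_ hVU (norm_nonneg _) (by positivity)
          calc ‖((2:H →L[ℂ] H) - U*V) * U‖ ≤ ‖(2:H →L[ℂ] H) - U*V‖ * ‖U‖ := norm_mul_le _ _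
            _ ≤ (2 + ε) * ‖U‖ := mul_le_mul_of_nonneg_right h2 hU
      _ = ε * ((2 + ε) * ‖U‖) := by ring
      _ ≤ _ := by
          refine key _ ?_
          have : (0:ℝ) ≤ (2 + ε) * ‖U‖ * ε := by positivity
          nlinarith [mul_nonneg h2ε hU]
  · -- (1,0)
    calc ‖V * ((1:H →L[ℂ] H) - U*V)‖ ≤ ‖V‖ * ‖(1:H →L[ℂ] H) - U*V‖ := norm_mul_le _ _
      _ ≤ ‖V‖ * ε := mul_le_mul_of_nonneg_left hUV hV
      _ = ε * ‖V‖ := by ring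
      _ ≤ _ := key _ (by linarith)
  · -- (1,1)
    rw [sq]
    calc ‖((1:H →L[ℂ] H) - V*U) * (1 - V*U)‖ ≤ ‖(1:H →L[ℂ] H) - V*U‖ * ‖(1:H →L[ℂ] H) - V*U‖ :=
          norm_mul_le _ _
      _ ≤ ε * ε := mul_le_mul hVU hVU (norm_nonneg _) hε
      _ ≤ _ := key ε (by linarith)
end

section
/- Let B be a self-adjoint operator on a Hilbert space H and suppose that ⟨(1 + λ² + b²B²)σ, σ⟩ ≥ ⟨ζ σ, σ⟩ for a nonnegative bounded function ζ with ζ = 1 + λ² + b²ε² on the support of a function χ with 0 ≤ χ ≤ 1. Then ‖χ (1 + λ² + b² B²)^{-1/2}‖ ≤ 1/√(1 + λ² + b² ε²). -/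
private lemma stmt7_sq_le {a b : ℝ} (ha : 0 ≤ a) (hb : 0 ≤ b) (h : a ^ 2 ≤ b ^ 2) : a ≤ b := by
  nlinarith

private lemma stmt7_aux {c un xn : ℝ} (hc : 0 < c) (hun : 0 ≤ un) (hxn : 0 ≤ xn)
    (key : c * un ^ 2 ≤ Real.sqrt (c * un ^ 2) * xn) : un ≤ 1 / Real.sqrt c * xn := by
  have hq2 : Real.sqrt (c * un ^ 2) ^ 2 = c * un ^ 2 :=
    Real.sq_sqrt (mul_nonneg hc.le (sq_nonneg _))
  have hq0 : 0 ≤ Real.sqrt (c * un ^ 2) := Real.sqrt_nonneg _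
  have hqx : Real.sqrt (c * un ^ 2) ≤ xn := by
    rcases hq0.eq_or_lt with h | h
    · rw [← h]; exact hxn
    · nlinarith
  have hcu : c * un ^ 2 ≤ xn ^ 2 := by nlinarith
  have hsc : 0 < Real.sqrt c := Real.sqrt_pos.mpr hc
  have hsq : (1 / Real.sqrt c * xn) ^ 2 = xn ^ 2 / c := by
    rw [mul_pow, div_pow, one_pow, Real.sq_sqrt hc.le]
    ring
  refine stmt7_sq_le hun (by positivity) ?_
  rw [hsq, le_div_iff₀ hc]
  nlinarith

/-- abstract version of Lemma 3.2: `B` self-adjoint, `χ, ζ` bounded self-adjoint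
with `0 ≤ χ ≤ 1`, `ζ ≥ 0`, `ζχ = (1+λ²+b²ε²)χ`, and the quadratic form inequality
`1 + λ² + b²B² ≥ ζ`. Then `‖χ (1 + λ² + b² B²)^{-1/2}‖ ≤ 1/√(1 + λ² + b² ε²)`. -/
theorem stmt7 {H : Type*} [NormedAddCommGroup H] [InnerProductSpace ℂ H] [CompleteSpace H]
    (B χ ζ : H →L[ℂ] H) (hB : IsSelfAdjoint B) (hχ : IsSelfAdjoint χ) (hζ : IsSelfAdjoint ζ)
    (b ε l : ℝ) (hb : 0 < b) (hε : 0 < ε) (hl : 0 ≤ l)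
    (hχ0 : χ.IsPositive) (hχ1 : ((1 : H →L[ℂ] H) - χ).IsPositive)
    (hζ0 : ζ.IsPositive)
    (hζχ : ζ * χ = ((1 + l ^ 2 + b ^ 2 * ε ^ 2 : ℝ) : ℂ) • χ)
    (hform : (((1 + l ^ 2 : ℝ) : ℂ) • (1 : H →L[ℂ] H) +
        ((b ^ 2 : ℝ) : ℂ) • (B * B) - ζ).IsPositive) :
    ‖χ * cfc (fun t : ℝ => 1 / Real.sqrt (1 + l ^ 2 + b ^ 2 * t ^ 2)) B‖ ≤
      1 / Real.sqrt (1 + l ^ 2 + b ^ 2 * ε ^ 2) := by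
  set c : ℝ := 1 + l ^ 2 + b ^ 2 * ε ^ 2 with hc_def
  have hc : 0 < c := by positivity
  set g : ℝ → ℝ := fun t => 1 + l ^ 2 + b ^ 2 * t ^ 2 with hg_def
  have hgpos : ∀ t, 0 < g t := fun t => by positivity
  set f : ℝ → ℝ := fun t => 1 / Real.sqrt (1 + l ^ 2 + b ^ 2 * t ^ 2) with hf_def
  have hf_cont : Continuous f := by
    apply Continuous.div continuous_const (by fun_prop)
    intro t
    exact (Real.sqrt_pos.mpr (hgpos t)).ne'
  have hg_cont : Continuous g := by fun_prop
  set R := cfc f B with hR_def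
  have hRsa : IsSelfAdjoint R := cfc_predicate f B
  set Aop := cfc g B with hA_def
  -- Aop equals the operator appearing in `hform`
  have hA_eq : Aop = ((1 + l ^ 2 : ℝ) : ℂ) • (1 : H →L[ℂ] H) + ((b ^ 2 : ℝ) : ℂ) • (B * B) := by
    have h1 : Aop = cfc (fun _ : ℝ => (1 + l ^ 2 : ℝ)) B + cfc (fun t : ℝ => b ^ 2 * t ^ 2) B := by
      rw [hA_def, ← cfc_add B _ _ (by fun_prop) (by fun_prop)]
    have h2 : cfc (fun _ : ℝ => (1 + l ^ 2 : ℝ)) B = algebraMap ℝ (H →L[ℂ] H) (1 + l ^ 2) :=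
      cfc_const _ _ hB
    have h3 : cfc (fun t : ℝ => b ^ 2 * t ^ 2) B = (b ^ 2 : ℝ) • (B ^ 2) := by
      rw [cfc_const_mul (b ^ 2 : ℝ) (fun t : ℝ => t ^ 2) B (by fun_prop), cfc_pow_id B 2 hB]
    rw [h1, h2, h3, Algebra.algebraMap_eq_smul_one, pow_two B, Complex.coe_smul, Complex.coe_smul]
  have hζ0' : (0 : H →L[ℂ] H) ≤ ζ := (ContinuousLinearMap.nonneg_iff_isPositive ζ).mpr hζ0
  have hχ0' : (0 : H →L[ℂ] H) ≤ χ := (ContinuousLinearMap.nonneg_iff_isPositive χ).mpr hχ0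
  have hχ1' : χ ≤ 1 := (ContinuousLinearMap.le_def χ 1).mpr hχ1
  have hζA : ζ ≤ Aop := by
    rw [ContinuousLinearMap.le_def, hA_eq]
    exact hform
  -- χ² ≤ χ
  have hχsq : χ * χ ≤ χ := by
    have := CStarAlgebra.pow_antitone hχ0' hχ1' (show (1 : ℕ) ≤ 2 by norm_num)
    simpa [pow_one, sq] using this
  -- R * Aop * R = 1
  have hRAR : R * Aop * R = 1 := by
    have h1 : R * Aop = cfc (fun t => f t * g t) B :=
      (cfc_mul f g B hf_cont.continuousOn hg_cont.continuousOn).symm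
    have h2 : cfc (fun t => f t * g t) B * R = cfc (fun t => (f t * g t) * f t) B :=
      (cfc_mul _ f B (by exact (hf_cont.mul hg_cont).continuousOn) hf_cont.continuousOn).symm
    rw [h1, h2]
    have h3 : ∀ t : ℝ, (f t * g t) * f t = 1 := by
      intro t
      have hgt := hgpos t
      have hs : Real.sqrt (g t) ≠ 0 := (Real.sqrt_pos.mpr hgt).ne'
      have : f t = 1 / Real.sqrt (g t) := rfl
      rw [this]
      field_simp
      rw [Real.sq_sqrt hgt.le]
    calc cfc (fun t => (f t * g t) * f t) B = cfc (fun _ : ℝ => (1 : ℝ)) B :=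
          cfc_congr (fun t _ => h3 t)
      _ = 1 := by rw [cfc_const _ _ hB, map_one]
  -- square root of ζ
  set s := cfc (fun t : ℝ => Real.sqrt t) ζ with hs_def
  have hssa : IsSelfAdjoint s := cfc_predicate _ ζ
  have hss : s * s = ζ := by
    rw [hs_def, ← cfc_mul _ _ ζ (by fun_prop) (by fun_prop)]
    have heq : (spectrum ℝ ζ).EqOn (fun t => Real.sqrt t * Real.sqrt t) id := fun t ht =>
      Real.mul_self_sqrt (spectrum_nonneg_of_nonneg hζ0' ht)
    rw [cfc_congr heq, cfc_id ℝ ζ hζ]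
  have hmul : ∀ (T S : H →L[ℂ] H) (v : H), (T * S) v = T (S v) := fun T S v => rfl
  have hss_apply : ∀ v, s (s v) = ζ v := fun v => by rw [← hmul s s v, hss]
  have hsadj : ∀ v w : H, (inner ℂ (s v) w : ℂ) = inner ℂ v (s w) := by
    intro v w
    conv_lhs => rw [← hssa.adjoint_eq]
    exact ContinuousLinearMap.adjoint_inner_left s w v
  have hχadj : ∀ v w : H, (inner ℂ (χ v) w : ℂ) = inner ℂ v (χ w) := by
    intro v w
    conv_lhs => rw [← hχ.adjoint_eq]
    exact ContinuousLinearMap.adjoint_inner_left χ w v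
  have hRadj : ∀ v w : H, (inner ℂ (R v) w : ℂ) = inner ℂ v (R w) := by
    intro v w
    conv_lhs => rw [← hRsa.adjoint_eq]
    exact ContinuousLinearMap.adjoint_inner_left R w v
  clear_value s R Aop
  clear_value c
  -- main pointwise estimate
  have hsc : 0 < Real.sqrt c := Real.sqrt_pos.mpr hc
  refine ContinuousLinearMap.opNorm_le_bound _ (by positivity) fun x => ?_
  set y : H := R x with hy_def
  set u : H := χ y with hu_def
  clear_value y u
  -- ζ u = c • u
  have hζu : ζ u = (c : ℂ) • u := by
    have h := congrArg (fun T : H →L[ℂ] H => T y) hζχ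
    simp only [hmul, ContinuousLinearMap.smul_apply] at h
    rw [hu_def]
    exact h
  -- ‖s u‖ ^ 2 = c * ‖u‖ ^ 2
  have hA1 : ‖s u‖ ^ 2 = c * ‖u‖ ^ 2 := by
    have h : (inner ℂ (s u) (s u) : ℂ) = (c : ℂ) * inner ℂ u u := by
      rw [hsadj u (s u), hss_apply u, hζu, inner_smul_right]
    rw [inner_self_eq_norm_sq_to_K (𝕜 := ℂ) (s u), inner_self_eq_norm_sq_to_K (𝕜 := ℂ) u] at h
    rw [show ((c : ℂ)) = RCLike.ofReal c from rfl, ← RCLike.ofReal_pow, ← RCLike.ofReal_pow,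
      ← RCLike.ofReal_mul] at h
    exact RCLike.ofReal_injective.eq_iff.mp h
  -- ‖s y‖ ^ 2 ≤ ‖x‖ ^ 2
  have hzy : RCLike.re (inner ℂ y (ζ y) : ℂ) = ‖s y‖ ^ 2 := by
    rw [← hss_apply y, ← hsadj y (s y)]
    exact inner_self_eq_norm_sq (𝕜 := ℂ) (s y)
  have hA2 : ‖s y‖ ^ 2 ≤ ‖x‖ ^ 2 := by
    have hP : (Aop - ζ).IsPositive := (ContinuousLinearMap.le_def ζ Aop).mp hζA
    have hpos : 0 ≤ RCLike.re (inner ℂ y ((Aop - ζ) y) : ℂ) := hP.re_inner_nonneg_right y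
    have hAy : RCLike.re (inner ℂ y (Aop y) : ℂ) = ‖x‖ ^ 2 := by
      have h1 : (inner ℂ y (Aop y) : ℂ) = inner ℂ x ((R * Aop * R) x) := by
        calc (inner ℂ y (Aop y) : ℂ) = inner ℂ (R x) (Aop (R x)) := by rw [hy_def]
          _ = inner ℂ x (R (Aop (R x))) := hRadj x (Aop (R x))
          _ = inner ℂ x ((R * Aop * R) x) := by rw [hmul (R * Aop) R x, hmul R Aop (R x)]
      rw [h1, hRAR, ContinuousLinearMap.one_apply]
      exact inner_self_eq_norm_sq (𝕜 := ℂ) x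
    have hsplit : RCLike.re (inner ℂ y ((Aop - ζ) y) : ℂ)
        = RCLike.re (inner ℂ y (Aop y) : ℂ) - RCLike.re (inner ℂ y (ζ y) : ℂ) := by
      rw [ContinuousLinearMap.sub_apply, inner_sub_right, map_sub]
    rw [hsplit, hAy, hzy] at hpos
    linarith
  -- ‖u‖ ^ 2 ≤ re ⟪y, u⟫
  have hA0 : ‖u‖ ^ 2 ≤ RCLike.re (inner ℂ y u : ℂ) := by
    have hP : (χ - χ * χ).IsPositive := (ContinuousLinearMap.le_def (χ * χ) χ).mp hχsq
    have hpos : 0 ≤ RCLike.re (inner ℂ y ((χ - χ * χ) y) : ℂ) := hP.re_inner_nonneg_right y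
    have h1 : RCLike.re (inner ℂ y ((χ * χ) y) : ℂ) = ‖u‖ ^ 2 := by
      rw [hmul χ χ y, ← hu_def, ← hχadj y u, ← hu_def]
      exact inner_self_eq_norm_sq (𝕜 := ℂ) u
    have hsplit : RCLike.re (inner ℂ y ((χ - χ * χ) y) : ℂ)
        = RCLike.re (inner ℂ y (χ y) : ℂ) - RCLike.re (inner ℂ y ((χ * χ) y) : ℂ) := by
      rw [ContinuousLinearMap.sub_apply, inner_sub_right, map_sub]
    rw [hsplit, h1, ← hu_def] at hpos
    linarith
  -- c * re ⟪y, u⟫ = re ⟪s y, s u⟫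
  have hA3 : c * RCLike.re (inner ℂ y u : ℂ) = RCLike.re (inner ℂ (s y) (s u) : ℂ) := by
    have h : (inner ℂ (s y) (s u) : ℂ) = (c : ℂ) * inner ℂ y u := by
      rw [hsadj y (s u), hss_apply u, hζu, inner_smul_right]
    rw [h, show ((c : ℂ)) = RCLike.ofReal c from rfl, RCLike.re_ofReal_mul]
  -- the chain
  have hsy_le : ‖s y‖ ≤ ‖x‖ := stmt7_sq_le (norm_nonneg _) (norm_nonneg _) hA2
  have key : c * ‖u‖ ^ 2 ≤ Real.sqrt (c * ‖u‖ ^ 2) * ‖x‖ := by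
    calc c * ‖u‖ ^ 2 ≤ c * RCLike.re (inner ℂ y u : ℂ) :=
          mul_le_mul_of_nonneg_left hA0 hc.le
      _ = RCLike.re (inner ℂ (s y) (s u) : ℂ) := hA3
      _ ≤ ‖s y‖ * ‖s u‖ := re_inner_le_norm (𝕜 := ℂ) _ _
      _ = ‖s y‖ * Real.sqrt (c * ‖u‖ ^ 2) := by
          rw [← hA1, Real.sqrt_sq (norm_nonneg _)]
      _ ≤ ‖x‖ * Real.sqrt (c * ‖u‖ ^ 2) :=
          mul_le_mul_of_nonneg_right hsy_le (Real.sqrt_nonneg _)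
      _ = Real.sqrt (c * ‖u‖ ^ 2) * ‖x‖ := mul_comm _ _
  have hfinal : ‖u‖ ≤ 1 / Real.sqrt c * ‖x‖ :=
    stmt7_aux hc (norm_nonneg _) (norm_nonneg _) key
  have happ : (χ * R) x = u := by rw [hmul χ R x, ← hy_def, ← hu_def]
  rw [happ]
  exact hfinal
end
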